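/- Let G be a finite simple graph and suppose there exists a chordal graph M on the same vertex set as G with E(G) ⊆ E(M) and clique number ω(M) = χ_DP(G) (equivalently, χ_DP(G) = tw(G) + 1, where tw denotes treewidth). Then G is partially DP-nice. -/

import Mathlib

open SimpleGraph

/-- `DPCover G H L` means `(L, H)` is a cover of the graph `G`:
(1) the sets `L u` partition `V(H)`; (2) each `H[L u]` is complete;
(3) for each edge `uv` of `G`, the edges of `H` between `L u` and `L v` form a matching;
(4) there are no edges of `H` between lists of distinct non-adjacent vertices. -/
structure DPCover {V : Type} (G : SimpleGraph V) {W : Type} (H : SimpleGraph W)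
    (L : V → Finset W) : Prop where
  partition : ∀ w : W, ∃! v : V, w ∈ L v
  cliques : ∀ v : V, ∀ a ∈ L v, ∀ b ∈ L v, a ≠ b → H.Adj a b
  matching : ∀ ⦃u v : V⦄, G.Adj u v → ∀ a ∈ L u, ∀ b ∈ L v, ∀ b' ∈ L v,
      H.Adj a b → H.Adj a b' → b = b'
  nonadj : ∀ ⦃u v : V⦄, u ≠ v → ¬ G.Adj u v → ∀ a ∈ L u, ∀ b ∈ L v, ¬ H.Adj a b

/-- A finset is independent in `H` if no two of its elements are adjacent. -/
def IsIndepFinset {W : Type} (H : SimpleGraph W) (S : Finset W) : Prop :=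
  ∀ a ∈ S, ∀ b ∈ S, ¬ H.Adj a b

/-- The independence number of `H`. -/
noncomputable def indepNum {W : Type} [Fintype W] (H : SimpleGraph W) : ℕ :=
  sSup {n : ℕ | ∃ S : Finset W, IsIndepFinset H S ∧ S.card = n}

/-- The DP-chromatic number of `G`: the least `m` such that every `m`-fold cover `(L, H)`
of `G` admits an `H`-coloring, i.e. an independent set in `H` of size `|V(G)|`. -/
noncomputable def chiDP {V : Type} [Fintype V] (G : SimpleGraph V) : ℕ :=
  sInf {m : ℕ | ∀ (W : Type) (_ : Fintype W) (H : SimpleGraph W) (L : V → Finset W),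
    DPCover G H L → (∀ v, (L v).card = m) →
    ∃ S : Finset W, IsIndepFinset H S ∧ S.card = Fintype.card V}

/-- The partial DP `t`-chromatic number of `G`: the minimum of the independence number
`α(H)` over all `t`-fold covers `(L, H)` of `G`. -/
noncomputable def alphaDP {V : Type} [Fintype V] (G : SimpleGraph V) (t : ℕ) : ℕ :=
  sInf {n : ℕ | ∃ (W : Type) (_ : Fintype W) (H : SimpleGraph W) (L : V → Finset W),
    DPCover G H L ∧ (∀ v, (L v).card = t) ∧ _root_.indepNum H = n}

/-- A graph `G` is partially DP-nice if `α_t^{DP}(G) ≥ t|V(G)|/χ_DP(G)` for all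
`t ∈ {1, …, χ_DP(G)}`. -/
def PartiallyDPNice {V : Type} [Fintype V] (G : SimpleGraph V) : Prop :=
  ∀ t : ℕ, 1 ≤ t → t ≤ chiDP G →
    (t * Fintype.card V : ℚ) / (chiDP G : ℚ) ≤ (alphaDP G t : ℚ)

/-- A graph is chordal if every cycle of length at least 4 has a chord: an edge of the
graph joining two vertices of the cycle that is not an edge of the cycle. -/
def IsChordalGraph {V : Type} (G : SimpleGraph V) : Prop :=
  ∀ ⦃v : V⦄ (c : G.Walk v v), c.IsCycle → 4 ≤ c.length →
    ∃ a b : V, a ∈ c.support ∧ b ∈ c.support ∧ G.Adj a b ∧ s(a, b) ∉ c.edges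

/-!
A chordal graph `M` has a perfect elimination order (Dirac), along which the later neighbours of
every vertex form a clique. Colouring greedily from the end of that order properly colours `M` with
`k = ω(M) = χ_DP(G)` colours, and some `t` of the colour classes together contain at least
`t·|V|/k` vertices; call their union `U`. A later neighbour of `v ∈ U` inside `U` lies in the
clique of later neighbours of `v`, so its colour is one of the `t - 1` chosen colours other than
that of `v`: every vertex of `U` has fewer than `t` later neighbours in `U`. Hence in any `t`-fold
cover of `G ≤ M` the vertices of `U` can be DP-coloured greedily, each coloured neighbour blocking
at most one element of a list, which gives `α(H) ≥ |U| ≥ t·|V|/k`.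
-/

namespace SimpleGraph

variable {V : Type*} {M : SimpleGraph V}

namespace Walk

variable {u v : V}

lemma exists_shorter_of_adj_getVert (w : M.Walk u v) {i j : ℕ} (hij : i + 1 < j)
    (hj : j ≤ w.length) (hadj : M.Adj (w.getVert i) (w.getVert j)) :
    ∃ w' : M.Walk u v, w'.length < w.length ∧ w'.support ⊆ w.support := by
  refine ⟨(w.take i).append (cons hadj (w.drop j)), ?_, fun x hx => ?_⟩
  · simp only [length_append, take_length, length_cons, drop_length]
    omega
  · rw [mem_support_append_iff, support_cons, List.mem_cons] at hx
    rcases hx with hx | rfl | hx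
    · exact (w.isSubwalk_take i).support_subset hx
    · exact (w.isSubwalk_take i).support_subset (w.take i).end_mem_support
    · exact (w.isSubwalk_drop j).support_subset hx

lemma mk_mem_edges_of_minimal (w : M.Walk u v)
    (hmin : ∀ w' : M.Walk u v, w'.support ⊆ w.support → w.length ≤ w'.length)
    {x y : V} (hx : x ∈ w.support) (hy : y ∈ w.support) (hadj : M.Adj x y) :
    s(x, y) ∈ w.edges := by
  obtain ⟨i, rfl, hi⟩ := mem_support_iff_exists_getVert.mp hx
  obtain ⟨j, rfl, hj⟩ := mem_support_iff_exists_getVert.mp hy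
  wlog hij : i ≤ j generalizing i j
  · rw [Sym2.eq_swap]
    exact this j hj hy i hi hx hadj.symm (by omega)
  rcases (by omega : j = i ∨ j = i + 1 ∨ i + 1 < j) with rfl | rfl | hlt
  · exact absurd hadj (M.irrefl)
  · exact (mk_mem_edges_iff_exists w).mpr ⟨i, by omega, rfl⟩
  · obtain ⟨w', hlen, hsub⟩ := w.exists_shorter_of_adj_getVert hlt hj hadj
    exact absurd (hmin w' hsub) (by omega)

lemma exists_isPath_chordless (P : V → Prop) (h : ∃ w : M.Walk u v, ∀ x ∈ w.support, P x) :
    ∃ w : M.Walk u v, w.IsPath ∧ (∀ x ∈ w.support, P x) ∧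
      ∀ x ∈ w.support, ∀ y ∈ w.support, M.Adj x y → s(x, y) ∈ w.edges := by
  classical
  have hex : ∃ n, ∃ w : M.Walk u v, (∀ x ∈ w.support, P x) ∧ w.length = n :=
    let ⟨w, hw⟩ := h; ⟨_, w, hw, rfl⟩
  obtain ⟨w, hwP, hwlen⟩ := Nat.find_spec hex
  have hmin : ∀ w' : M.Walk u v, (∀ x ∈ w'.support, P x) → w.length ≤ w'.length :=
    fun w' hw' => hwlen ▸ Nat.find_min' hex ⟨w', hw', rfl⟩
  have hsub : w.bypass.support ⊆ w.support := w.support_bypass_subset_support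
  refine ⟨w.bypass, w.bypass_isPath, fun x hx => hwP x (hsub hx), fun x hx y hy hadj => ?_⟩
  refine w.bypass.mk_mem_edges_of_minimal (fun w' hw' => ?_) hx hy hadj
  exact w.length_bypass_le_length.trans (hmin w' fun x hx => hwP x (hsub (hw' hx)))

end Walk

def IsSimplicialIn (M : SimpleGraph V) (A : Set V) (v : V) : Prop :=
  M.IsClique (A ∩ M.neighborSet v)

lemma IsSimplicialIn.mono {A B : Set V} {v : V} (h : M.IsSimplicialIn B v)
    (hAB : A ∩ M.neighborSet v ⊆ B) : M.IsSimplicialIn A v :=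
  IsClique.subset (Set.subset_inter hAB Set.inter_subset_right) h

def ReachableWithin (M : SimpleGraph V) (D : Set V) (x y : V) : Prop :=
  ∃ w : M.Walk x y, ∀ z ∈ w.support, z ∈ D

namespace ReachableWithin

variable {D : Set V} {x y z : V}

lemma refl (hx : x ∈ D) : M.ReachableWithin D x x :=
  ⟨(Walk.nil : M.Walk x x), by simpa using hx⟩

lemma mem_right (h : M.ReachableWithin D x y) : y ∈ D :=
  let ⟨w, hw⟩ := h
  hw y w.end_mem_support

lemma symm (h : M.ReachableWithin D x y) : M.ReachableWithin D y x :=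
  let ⟨w, hw⟩ := h
  ⟨w.reverse, fun z hz => hw z (by simpa using hz)⟩

lemma trans (h₁ : M.ReachableWithin D x y) (h₂ : M.ReachableWithin D y z) :
    M.ReachableWithin D x z :=
  let ⟨w₁, hw₁⟩ := h₁
  let ⟨w₂, hw₂⟩ := h₂
  ⟨w₁.append w₂, fun v hv => (Walk.mem_support_append_iff _ _).mp hv |>.elim (hw₁ v) (hw₂ v)⟩

lemma concat (h : M.ReachableWithin D x y) (hyz : M.Adj y z) (hz : z ∈ D) :
    M.ReachableWithin D x z :=
  let ⟨w, hw⟩ := h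
  ⟨w.concat hyz, fun v hv => by
    rw [Walk.support_concat, List.mem_append, List.mem_singleton] at hv
    exact hv.elim (hw v) (· ▸ hz)⟩

end ReachableWithin

end SimpleGraph

section

variable {V : Type} {M : SimpleGraph V}

/-- A chordless such path would close up through `a` to a chordless cycle of length at least
four. -/
theorem IsChordalGraph.adj_of_walk_avoiding (hM : IsChordalGraph M) {a s s' : V}
    (has : M.Adj a s) (has' : M.Adj a s') (hne : s ≠ s') (w : M.Walk s s')
    (hw : ∀ x ∈ w.support, x = s ∨ x = s' ∨ (x ≠ a ∧ ¬ M.Adj a x)) : M.Adj s s' := by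
  by_contra hnadj
  obtain ⟨p, hp, hpP, hchordless⟩ := Walk.exists_isPath_chordless _ ⟨w, hw⟩
  have ha : a ∉ p.support := fun h => by
    rcases hpP a h with rfl | rfl | h
    exacts [M.irrefl has, M.irrefl has', h.1 rfl]
  have hlen : 2 ≤ p.length := by
    by_contra! h
    interval_cases hl : p.length
    exacts [hne (Walk.eq_of_length_eq_zero hl), hnadj (Walk.adj_of_length_eq_one hl)]
  set c := Walk.cons has (p.concat has'.symm)
  have hc : c.IsCycle := by
    refine (Walk.cons_isCycle_iff _ _).mpr ⟨hp.concat ha _, fun h => ?_⟩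
    rw [Walk.edges_concat, List.concat_eq_append, List.mem_append, List.mem_singleton] at h
    rcases h with h | h
    · exact ha (p.fst_mem_support_of_mem_edges h)
    · rcases Sym2.eq_iff.mp h with ⟨rfl, -⟩ | ⟨-, rfl⟩
      exacts [M.irrefl has', hne rfl]
  have hc_support : ∀ x ∈ c.support, x = a ∨ x ∈ p.support := by
    simp only [c, Walk.support_cons, Walk.support_concat, List.mem_cons, List.mem_append]
    tauto
  have hc_edges : ∀ e ∈ p.edges, e ∈ c.edges := by
    simp +contextual [c, Walk.edges_cons, Walk.edges_concat]
  have hc_spoke : ∀ y ∈ p.support, M.Adj a y → s(a, y) ∈ c.edges := by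
    intro y hy hay
    rcases hpP y hy with rfl | rfl | h
    · simp [c]
    · simp [c, Walk.edges_concat, Sym2.eq_swap]
    · exact absurd hay h.2
  obtain ⟨x, y, hx, hy, hxy, hchord⟩ := hM c hc (by simp [c]; omega)
  rcases hc_support x hx with rfl | hxp <;> rcases hc_support y hy with rfl | hyp
  · exact M.irrefl hxy
  · exact hchord (hc_spoke y hyp hxy)
  · exact hchord (Sym2.eq_swap ▸ hc_spoke x hxp hxy.symm)
  · exact hchord (hc_edges _ (hchordless x hxp y hyp hxy))

theorem IsChordalGraph.isClique_of_forall_adj (hM : IsChordalGraph M) {a b : V} {D S : Set V}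
    (hD : ∀ x ∈ D, x ≠ a ∧ ¬ M.Adj a x) (hSa : ∀ s ∈ S, M.Adj a s)
    (hSD : ∀ s ∈ S, ∃ c, M.ReachableWithin D b c ∧ M.Adj s c) : M.IsClique S := by
  intro s hs s' hs' hne
  obtain ⟨c, hc, hsc⟩ := hSD s hs
  obtain ⟨c', hc', hs'c'⟩ := hSD s' hs'
  obtain ⟨w, hw⟩ := hc.symm.trans hc'
  refine hM.adj_of_walk_avoiding (hSa s hs) (hSa s' hs') hne (.cons hsc (w.concat hs'c'.symm)) ?_
  intro x hx
  simp only [Walk.support_cons, Walk.support_concat, List.mem_cons, List.mem_append,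
    List.mem_nil_iff, or_false] at hx
  rcases hx with rfl | hx | rfl
  exacts [.inl rfl, .inr (.inr (hD x (hw x hx))), .inr (.inl rfl)]

lemma exists_simplicialIn_notMem {B : Finset V} {S : Set V}
    (h : M.IsClique (B : Set V) ∨ ∃ u ∈ B, ∃ v ∈ B, ¬ M.Adj u v ∧ u ≠ v ∧
      M.IsSimplicialIn B u ∧ M.IsSimplicialIn B v)
    (hS : M.IsClique S) {x : V} (hxB : x ∈ B) (hxS : x ∉ S) :
    ∃ v ∈ B, v ∉ S ∧ M.IsSimplicialIn B v := by
  rcases h with hB | ⟨u, hu, v, hv, huv, hne, hsu, hsv⟩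
  · exact ⟨x, hxB, hxS, hB.subset Set.inter_subset_left⟩
  · by_cases huS : u ∈ S
    · exact ⟨v, hv, fun hvS => huv (hS huS hvS hne), hsv⟩
    · exact ⟨u, hu, huS, hsu⟩

open Finset in
/-- Dirac's lemma. With `D` the part of `A` outside the closed neighbourhood of `a`, `C` the
component of `b` in `D` and `S` its neighbourhood, `S` is a clique and separates `C` from
`A \ (C ∪ S) ∋ a`; induction on `C ∪ S` and on `A \ C` yields a simplicial vertex on each side. -/
theorem IsChordalGraph.isClique_or_exists_simplicialIn_pair (hM : IsChordalGraph M)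
    (A : Finset V) :
    M.IsClique (A : Set V) ∨ ∃ u ∈ A, ∃ v ∈ A, ¬ M.Adj u v ∧ u ≠ v ∧
      M.IsSimplicialIn A u ∧ M.IsSimplicialIn A v := by
  classical
  induction A using Finset.strongInduction with
  | H A ih =>
  by_cases hA : M.IsClique (A : Set V)
  · exact .inl hA
  obtain ⟨a, ha, b, hb, hab, hnab⟩ : ∃ a ∈ A, ∃ b ∈ A, a ≠ b ∧ ¬ M.Adj a b := by
    simpa [IsClique, Set.Pairwise] using hA
  set D := A.filter fun x => x ≠ a ∧ ¬ M.Adj a x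
  set C := A.filter fun x => M.ReachableWithin D b x
  set S := A.filter fun x => x ∉ C ∧ ∃ c ∈ C, M.Adj x c
  have hCD : ∀ x ∈ C, x ∈ D := fun x hx => (mem_filter.mp hx).2.mem_right
  have hbC : b ∈ C := mem_filter.mpr ⟨hb, .refl (by simp [D, hb, hab.symm, hnab])⟩
  have haC : a ∉ C := fun h => (mem_filter.mp (hCD a h)).2.1 rfl
  have hSa : ∀ s ∈ S, M.Adj a s := by
    intro s hs
    obtain ⟨hsA, hsC, c, hc, hsc⟩ := mem_filter.mp hs
    by_contra has
    have hsa : s ≠ a := by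
      rintro rfl
      exact (mem_filter.mp (hCD c hc)).2.2 hsc
    exact hsC (mem_filter.mpr ⟨hsA, (mem_filter.mp hc).2.concat hsc.symm
      (by simp [D, hsA, hsa, has])⟩)
  have hS : M.IsClique (S : Set V) := by
    refine hM.isClique_of_forall_adj (b := b) (D := D) (fun x hx => (mem_filter.mp hx).2) hSa
      fun s hs => ?_
    obtain ⟨-, -, c, hc, hsc⟩ := mem_filter.mp hs
    exact ⟨c, (mem_filter.mp hc).2, hsc⟩
  have hCS : C ∪ S ⊂ A := by
    refine ssubset_iff_of_subset (union_subset (filter_subset _ _) (filter_subset _ _)) |>.mpr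
      ⟨a, ha, ?_⟩
    rw [mem_union, not_or]
    exact ⟨haC, fun h => M.irrefl (hSa a h)⟩
  obtain ⟨v, hv, hvS, hvs⟩ := exists_simplicialIn_notMem
    (ih (C ∪ S) hCS) hS (mem_union_left _ hbC) fun h => (mem_filter.mp h).2.1 hbC
  obtain ⟨u, hu, huS, hus⟩ := exists_simplicialIn_notMem
    (ih (A \ C) (sdiff_ssubset (filter_subset _ _) ⟨b, hbC⟩)) hS (mem_sdiff.mpr ⟨ha, haC⟩)
    fun h => M.irrefl (hSa a h)
  have hvC : v ∈ C := (mem_union.mp hv).resolve_right hvS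
  obtain ⟨huA, huC⟩ := mem_sdiff.mp hu
  have hvA : v ∈ A := filter_subset _ _ hvC
  have hu_nadj : ∀ y ∈ C, ¬ M.Adj u y := fun y hy h => huS (mem_filter.mpr ⟨huA, huC, y, hy, h⟩)
  refine .inr ⟨u, huA, v, hvA, hu_nadj v hvC, fun h => huC (h ▸ hvC), hus.mono ?_, hvs.mono ?_⟩
  · rintro y ⟨hyA, huy⟩
    exact mem_sdiff.mpr ⟨hyA, fun hyC => hu_nadj y hyC huy⟩
  · rintro y ⟨hyA, hvy⟩
    by_cases hyC : y ∈ C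
    · exact mem_union_left _ hyC
    · exact mem_union_right _ (mem_filter.mpr ⟨hyA, hyC, v, hvC, hvy.symm⟩)

theorem IsChordalGraph.exists_simplicialIn (hM : IsChordalGraph M) {A : Finset V}
    (hA : A.Nonempty) : ∃ v ∈ A, M.IsSimplicialIn A v := by
  obtain ⟨x, hx⟩ := hA
  obtain ⟨v, hv, -, hvs⟩ := exists_simplicialIn_notMem
    (hM.isClique_or_exists_simplicialIn_pair A) (S := ∅) (Set.pairwise_empty _) hx
    (Set.notMem_empty x)
  exact ⟨v, hv, hvs⟩

def IsPerfectEliminationOrder (M : SimpleGraph V) : List V → Prop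
  | [] => True
  | v :: l => M.IsSimplicialIn {x | x ∈ l} v ∧ IsPerfectEliminationOrder M l

theorem IsChordalGraph.exists_perfectEliminationOrder (hM : IsChordalGraph M) (A : Finset V) :
    ∃ l : List V, l.Nodup ∧ (∀ x, x ∈ l ↔ x ∈ A) ∧ IsPerfectEliminationOrder M l := by
  classical
  induction A using Finset.strongInduction with
  | H A ih =>
  rcases A.eq_empty_or_nonempty with rfl | hA
  · exact ⟨[], List.nodup_nil, by simp, trivial⟩
  obtain ⟨v, hv, hvs⟩ := hM.exists_simplicialIn hA
  obtain ⟨l, hl, hlA, hpeo⟩ := ih (A.erase v) (Finset.erase_ssubset hv)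
  refine ⟨v :: l, List.nodup_cons.mpr ⟨fun h => by simpa using (hlA v).mp h, hl⟩,
    fun x => ?_, hvs.mono fun x hx => ?_, hpeo⟩
  · rw [List.mem_cons, hlA, Finset.mem_erase]
    by_cases hxv : x = v <;> simp [hxv, hv]
  · exact Finset.mem_of_mem_erase ((hlA x).mp hx.1)

def LaterDegreeLT (G : SimpleGraph V) (t : ℕ) : List V → Prop
  | [] => True
  | v :: l => ({x | x ∈ l} ∩ G.neighborSet v).ncard < t ∧ LaterDegreeLT G t l

lemma ncard_inter_neighborSet_eq_card_filter [DecidableEq V] {G : SimpleGraph V}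
    [DecidableRel G.Adj] (l : List V) (v : V) :
    ({x | x ∈ l} ∩ G.neighborSet v).ncard = (l.toFinset.filter (G.Adj v)).card := by
  rw [← Set.ncard_coe_finset]
  congr 1
  ext
  simp

theorem IsPerfectEliminationOrder.laterDegreeLT {k : ℕ} (hk : M.CliqueFree (k + 1)) :
    ∀ {l : List V}, IsPerfectEliminationOrder M l → LaterDegreeLT M k l
  | [], _ => trivial
  | v :: l, ⟨hv, hl⟩ => by
    classical
    refine ⟨?_, hl.laterDegreeLT hk⟩
    rw [ncard_inter_neighborSet_eq_card_filter]
    by_contra! hle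
    obtain ⟨F, hF, hFcard⟩ := Finset.exists_subset_card_eq hle
    have hvF : v ∉ F := fun h => M.irrefl (Finset.mem_filter.mp (hF h)).2
    refine hk (insert v F) ⟨?_, by rw [Finset.card_insert_of_notMem hvF, hFcard]⟩
    rw [Finset.coe_insert, isClique_insert]
    refine ⟨hv.subset fun x hx => ?_, fun x hx _ => (Finset.mem_filter.mp (hF hx)).2⟩
    simpa using hF hx

/-- The later neighbours of a vertex form a clique of `M`, so they carry distinct colours of `T`,
all different from the colour of the vertex itself. -/
theorem IsPerfectEliminationOrder.laterDegreeLT_filter {G : SimpleGraph V} (hle : G ≤ M)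
    {α : Type*} [DecidableEq α] {c : V → α} (hc : ∀ ⦃p q⦄, M.Adj p q → c p ≠ c q) (T : Finset α) :
    ∀ {l : List V}, IsPerfectEliminationOrder M l →
      LaterDegreeLT G T.card (l.filter fun v => c v ∈ T)
  | [], _ => trivial
  | v :: l, ⟨hv, hl⟩ => by
    by_cases hvT : c v ∈ T
    · rw [List.filter_cons_of_pos (by simpa using hvT)]
      refine ⟨?_, hl.laterDegreeLT_filter hle hc T⟩
      set N := {x | x ∈ l.filter fun v => c v ∈ T} ∩ G.neighborSet v
      have hNl : ∀ x ∈ N, x ∈ l ∧ c x ∈ T ∧ M.Adj v x := by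
        rintro x ⟨hxl, hvx⟩
        simp only [Set.mem_ofPred_eq, List.mem_filter, decide_eq_true_eq] at hxl
        exact ⟨hxl.1, hxl.2, hle hvx⟩
      calc N.ncard ≤ (T.erase (c v) : Set α).ncard := by
            refine Set.ncard_le_ncard_of_injOn c (fun x hx => ?_) (fun x hx y hy hxy => ?_)
              (Finset.finite_toSet _)
            · obtain ⟨-, hxT, hvx⟩ := hNl x hx
              exact Finset.mem_erase.mpr ⟨(hc hvx).symm, hxT⟩
            · by_contra hne
              obtain ⟨hxl, -, hvx⟩ := hNl x hx
              obtain ⟨hyl, -, hvy⟩ := hNl y hy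
              exact hc (hv ⟨hxl, hvx⟩ ⟨hyl, hvy⟩ hne) hxy
        _ < T.card := by
            rw [Set.ncard_coe_finset]
            exact Finset.card_erase_lt_of_mem hvT
    · rw [List.filter_cons_of_neg (by simpa using hvT)]
      exact hl.laterDegreeLT_filter hle hc T

namespace DPCover

variable {G : SimpleGraph V} {W : Type} {H : SimpleGraph W} {L : V → Finset W}

lemma eq_of_mem (cov : DPCover G H L) {u v : V} {w : W} (hu : w ∈ L u) (hv : w ∈ L v) :
    u = v :=
  (cov.partition w).unique hu hv

lemma exists_mem_forall_not_adj (cov : DPCover G H L) {f : V → W} {v : V} {N : Finset V}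
    (hN : ∀ u ∈ N, G.Adj u v ∧ f u ∈ L u) (hcard : N.card < (L v).card) :
    ∃ b ∈ L v, ∀ u ∈ N, ¬ H.Adj (f u) b := by
  classical
  set B := N.biUnion fun u => (L v).filter (H.Adj (f u))
  have hB : B.card ≤ N.card := by
    refine (Finset.card_biUnion_le_card_mul _ _ 1 fun u hu => ?_).trans (mul_one _).le
    refine Finset.card_le_one.mpr fun b hb b' hb' => ?_
    rw [Finset.mem_filter] at hb hb'
    exact cov.matching (hN u hu).1 _ (hN u hu).2 b hb.1 b' hb'.1 hb.2 hb'.2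
  obtain ⟨b, hbL, hbB⟩ := Finset.exists_mem_notMem_of_card_lt_card (hB.trans_lt hcard)
  exact ⟨b, hbL, fun u hu hadj =>
    hbB (Finset.mem_biUnion.mpr ⟨u, hu, Finset.mem_filter.mpr ⟨hbL, hadj⟩⟩)⟩

theorem exists_indep_transversal (cov : DPCover G H L) {t : ℕ} (ht : 0 < t)
    (hL : ∀ v, t ≤ (L v).card) :
    ∀ {l : List V}, l.Nodup → LaterDegreeLT G t l →
      ∃ f : V → W, (∀ v, f v ∈ L v) ∧ ∀ p ∈ l, ∀ q ∈ l, ¬ H.Adj (f p) (f q)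
  | [], _, _ => ⟨fun v => (Finset.card_pos.mp (ht.trans_le (hL v))).choose,
      fun v => (Finset.card_pos.mp (ht.trans_le (hL v))).choose_spec, by simp⟩
  | v :: l, hnd, ⟨hv, hl⟩ => by
    classical
    obtain ⟨hvl, hnd⟩ := List.nodup_cons.mp hnd
    obtain ⟨f, hfL, hf⟩ := exists_indep_transversal cov ht hL hnd hl
    rw [ncard_inter_neighborSet_eq_card_filter] at hv
    obtain ⟨b, hbL, hbN⟩ := cov.exists_mem_forall_not_adj
      (fun u hu => ⟨(Finset.mem_filter.mp hu).2.symm, hfL u⟩) (hv.trans_le (hL v))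
    have hb : ∀ u ∈ l, ¬ H.Adj (f u) b := by
      intro u hu
      by_cases hvu : G.Adj v u
      · exact hbN u (by simp [hu, hvu])
      · exact cov.nonadj (ne_of_mem_of_not_mem hu hvl) (fun h => hvu h.symm) _ (hfL u) b hbL
    have hupd : ∀ u ∈ l, Function.update f v b u = f u := fun u hu =>
      Function.update_of_ne (ne_of_mem_of_not_mem hu hvl) _ _
    refine ⟨Function.update f v b, fun u => ?_, ?_⟩
    · by_cases hu : u = v
      · subst hu; simpa using hbL
      · simpa [hu] using hfL u
    · intro p hp q hq
      rcases List.mem_cons.mp hp with rfl | hpl <;> rcases List.mem_cons.mp hq with rfl | hql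
      · simp
      · rw [Function.update_self, hupd q hql]
        exact fun h => hb q hql h.symm
      · rw [Function.update_self, hupd p hpl]
        exact hb p hpl
      · rw [hupd p hpl, hupd q hql]
        exact hf p hpl q hql

theorem exists_indepFinset (cov : DPCover G H L) {t : ℕ} (ht : 0 < t)
    (hL : ∀ v, t ≤ (L v).card) {l : List V} (hl : l.Nodup) (hdeg : LaterDegreeLT G t l) :
    ∃ S : Finset W, IsIndepFinset H S ∧ S.card = l.length := by
  classical
  obtain ⟨f, hfL, hf⟩ := cov.exists_indep_transversal ht hL hl hdeg
  refine ⟨l.toFinset.image f, ?_, ?_⟩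
  · simp only [IsIndepFinset, Finset.mem_image, List.mem_toFinset]
    rintro _ ⟨p, hp, rfl⟩ _ ⟨q, hq, rfl⟩
    exact hf p hp q hq
  · have hf_inj : Function.Injective f := fun p q h => cov.eq_of_mem (hfL p) (h ▸ hfL q)
    rw [Finset.card_image_of_injective _ hf_inj, List.toFinset_card_of_nodup hl]

end DPCover

lemma mem_singleton_product_univ {m : ℕ} {v : V} {w : V × Fin m} :
    w ∈ ({v} ×ˢ Finset.univ : Finset (V × Fin m)) ↔ w.1 = v := by
  rw [Finset.mem_product]
  simp

/-- The cover whose colourings are the proper `m`-colourings of `G`. -/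
theorem dpCover_boxProd_top (G : SimpleGraph V) (m : ℕ) :
    DPCover G (G □ (⊤ : SimpleGraph (Fin m))) fun v => {v} ×ˢ Finset.univ where
  partition w := ⟨w.1, mem_singleton_product_univ.mpr rfl,
    fun _ hv => (mem_singleton_product_univ.mp hv).symm⟩
  cliques v a ha b hb hab := by
    rw [mem_singleton_product_univ] at ha hb
    simp only [boxProd_adj, top_adj]
    exact .inr ⟨fun h => hab (Prod.ext (ha.trans hb.symm) h), ha.trans hb.symm⟩
  matching u v huv a ha b hb b' hb' hab hab' := by
    rw [mem_singleton_product_univ] at ha hb hb'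
    simp only [boxProd_adj, top_adj] at hab hab'
    have hne : a.1 ≠ b.1 := by rw [ha, hb]; exact huv.ne
    have hne' : a.1 ≠ b'.1 := by rw [ha, hb']; exact huv.ne
    exact Prod.ext (hb.trans hb'.symm) ((hab.resolve_right fun h => hne h.2).2.symm.trans
      (hab'.resolve_right fun h => hne' h.2).2)
  nonadj u v huv hnuv a ha b hb hab := by
    rw [mem_singleton_product_univ] at ha hb
    simp only [boxProd_adj, top_adj, ha, hb] at hab
    exact hab.elim (fun h => hnuv h.1) fun h => huv h.2

theorem LaterDegreeLT.colorable {k : ℕ} {l : List V} (hdeg : LaterDegreeLT M k l)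
    (hl : l.Nodup) (hmem : ∀ v, v ∈ l) : M.Colorable k := by
  rcases Nat.eq_zero_or_pos k with rfl | hk
  · refine colorable_zero_iff.mpr ⟨fun v => ?_⟩
    obtain ⟨v', l', rfl⟩ := List.exists_cons_of_ne_nil (List.ne_nil_of_mem (hmem v))
    exact absurd hdeg.1 (Nat.not_lt_zero _)
  obtain ⟨f, hfL, hf⟩ := (dpCover_boxProd_top M k).exists_indep_transversal hk (by simp) hl hdeg
  have hf1 : ∀ v, (f v).1 = v := fun v => mem_singleton_product_univ.mp (hfL v)
  refine ⟨Coloring.mk (fun v => (f v).2) fun {p q} hpq hc => hf p (hmem p) q (hmem q) ?_⟩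
  simp only [boxProd_adj, hf1]
  exact .inl ⟨hpq, hc⟩

lemma IsIndepFinset.card_le_indepNum {W : Type} [Fintype W] {H : SimpleGraph W} {S : Finset W}
    (hS : IsIndepFinset H S) : S.card ≤ _root_.indepNum H :=
  le_csSup ⟨Fintype.card W, fun _ ⟨S', _, hS'⟩ => hS' ▸ S'.card_le_univ⟩ ⟨S, hS, rfl⟩

theorem le_alphaDP [Fintype V] {G : SimpleGraph V} {t m : ℕ}
    (h : ∀ (W : Type) (_ : Fintype W) (H : SimpleGraph W) (L : V → Finset W),
      DPCover G H L → (∀ v, (L v).card = t) → ∃ S : Finset W, IsIndepFinset H S ∧ m ≤ S.card) :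
    m ≤ alphaDP G t := by
  refine le_csInf ⟨_, _, inferInstance, _, _, dpCover_boxProd_top G t, by simp, rfl⟩ ?_
  rintro _ ⟨W, hW, H, L, cov, hL, rfl⟩
  obtain ⟨S, hS, hmS⟩ := h W hW H L cov hL
  exact hmS.trans hS.card_le_indepNum

end

namespace Finset

variable {ι : Type*} [DecidableEq ι]

theorem exists_subset_card_eq_forall_le {α : Type*} [LinearOrder α] (K : Finset ι) (f : ι → α)
    {t : ℕ} (ht : t ≤ #K) : ∃ T ⊆ K, #T = t ∧ ∀ y ∈ K \ T, ∀ z ∈ T, f y ≤ f z := by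
  induction t with
  | zero => exact ⟨∅, empty_subset _, rfl, by simp⟩
  | succ t ih =>
    obtain ⟨T, hTK, hTc, hT⟩ := ih (by omega)
    obtain ⟨x, hx, hxmax⟩ := (K \ T).exists_max_image f
      (by rw [← card_pos, card_sdiff_of_subset hTK]; omega)
    obtain ⟨hxK, hxT⟩ := mem_sdiff.mp hx
    refine ⟨insert x T, insert_subset hxK hTK, by rw [card_insert_of_notMem hxT, hTc],
      fun y hy z hz => ?_⟩
    have hy' : y ∈ K \ T := sdiff_subset_sdiff subset_rfl (subset_insert x T) hy
    rcases mem_insert.mp hz with rfl | hz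
    exacts [hxmax y hy', hT y hy' z hz]

theorem exists_subset_card_eq_mul_sum_le (K : Finset ι) (f : ι → ℕ) {t : ℕ} (ht : t ≤ #K) :
    ∃ T ⊆ K, #T = t ∧ t * ∑ i ∈ K, f i ≤ #K * ∑ i ∈ T, f i := by
  obtain ⟨T, hTK, hTc, hT⟩ := K.exists_subset_card_eq_forall_le f ht
  refine ⟨T, hTK, hTc, ?_⟩
  have hout : t * ∑ i ∈ K \ T, f i ≤ (#K - t) * ∑ i ∈ T, f i := by
    rw [mul_sum, ← hTc, ← card_sdiff_of_subset hTK, ← smul_eq_mul, ← sum_const]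
    exact sum_le_sum fun y hy => card_nsmul_le_sum T f (f y) (hT y hy)
  calc t * ∑ i ∈ K, f i = t * ∑ i ∈ K \ T, f i + t * ∑ i ∈ T, f i := by
        rw [← sum_sdiff hTK, mul_add]
    _ ≤ (#K - t) * ∑ i ∈ T, f i + t * ∑ i ∈ T, f i := by gcongr
    _ = #K * ∑ i ∈ T, f i := by rw [← add_mul, Nat.sub_add_cancel ht]

end Finset

open Finset in
theorem exists_card_mul_le_card_preimage {V α : Type*} [Fintype V] [Fintype α] [DecidableEq α]
    (c : V → α) {t : ℕ} (ht : t ≤ Fintype.card α) :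
    ∃ T : Finset α, #T = t ∧ t * Fintype.card V ≤ Fintype.card α * #{v | c v ∈ T} := by
  obtain ⟨T, -, hTc, hT⟩ :=
    univ.exists_subset_card_eq_mul_sum_le (fun i => #{v | c v = i}) ht
  refine ⟨T, hTc, ?_⟩
  rwa [← card_eq_sum_card_fiberwise fun _ _ => mem_univ _, sum_card_fiberwise_eq_card_filter,
    card_univ, card_univ] at hT

open Finset in
/-- If there is a chordal graph `M` on the same vertex set as `G` with `E(G) ⊆ E(M)` and
`ω(M) = χ_DP(G)` (i.e. `χ_DP(G) = tw(G) + 1`), then `G` is partially DP-nice. -/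
theorem partiallyDPNice_of_chiDP_eq_treewidth_succ {V : Type} [Fintype V]
    (G : SimpleGraph V) (M : SimpleGraph V) (hM : IsChordalGraph M) (hle : G ≤ M)
    (hclique : M.cliqueNum = chiDP G) : PartiallyDPNice G := by
  classical
  intro t ht htk
  set k := chiDP G
  obtain ⟨l, hl, hl_mem, hpeo⟩ := hM.exists_perfectEliminationOrder univ
  have hfree : M.CliqueFree (k + 1) := fun s hs => by
    have h := hs.isClique.card_le_cliqueNum
    rw [hs.card_eq, hclique] at h
    omega
  obtain ⟨c⟩ := (hpeo.laterDegreeLT hfree).colorable hl (by simpa using hl_mem)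
  obtain ⟨T, hT, htn⟩ := exists_card_mul_le_card_preimage c (by simpa using htk)
  have hU : (l.filter fun v => c v ∈ T).length = #{v | c v ∈ T} := by
    rw [← List.toFinset_card_of_nodup (hl.filter _)]
    congr 1
    ext v
    simp [hl_mem]
  have hα : #{v | c v ∈ T} ≤ alphaDP G t := le_alphaDP fun W _ H L cov hL => by
    obtain ⟨S, hS, hScard⟩ := cov.exists_indepFinset ht (fun v => (hL v).ge) (hl.filter _)
      (hT ▸ hpeo.laterDegreeLT_filter hle (fun _ _ h => c.valid h) T)
    exact ⟨S, hS, by rw [hScard, hU]⟩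
  rw [div_le_iff₀ (by exact_mod_cast ht.trans htk)]
  simp only [Fintype.card_fin] at htn
  exact_mod_cast htn.trans (by rw [mul_comm]; exact Nat.mul_le_mul_right k hα)
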